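/- arXiv:1002.2325 — 4 statements merged into one kernel-verified Lean document; each statement's English description precedes it below -/
import Mathlib

section
/- Let v_1, ..., v_r be vectors in K^k (K a field) and let (a_{i,j}) be a symmetric r×r array of scalars. Suppose that for each i = 1, ..., r-1 the pair {v_i, Σ_{j=1}^r a_{i,j} v_j} is linearly dependent. Then the pair {v_r, Σ_{j=1}^r a_{r,j} v_j} is also linearly dependent. -/
/-- Lemma on redundancy of admissibility conditions: if a symmetric array `a`
and vectors `v` satisfy the dependence condition at all indices but the last,
then it also holds at the last index. -/
theorem stmt_0 {K : Type*} [Field K] {k n : ℕ}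
    (v : Fin (n + 1) → (Fin k → K)) (a : Fin (n + 1) → Fin (n + 1) → K)
    (hsym : ∀ i j, a i j = a j i)
    (h : ∀ i : Fin (n + 1), i ≠ Fin.last n →
      ∃ α β : K, (α ≠ 0 ∨ β ≠ 0) ∧ α • v i + β • (∑ j, a i j • v j) = 0) :
    ∃ α β : K, (α ≠ 0 ∨ β ≠ 0) ∧
      α • v (Fin.last n) + β • (∑ j, a (Fin.last n) j • v j) = 0 := by
  set L := Fin.last n with hL
  have hwx : ∀ (i : Fin (n+1)) (x : Fin k), (∑ j, a i j • v j) x = ∑ j, a i j * v j x := by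
    intro i x; simp
  -- each non-last term is symmetric in (s,t)
  have hterm : ∀ i : Fin (n+1), i ≠ L → ∀ s t : Fin k,
      v i s * (∑ j, a i j * v j t) = v i t * (∑ j, a i j * v j s) := by
    intro i hi s t
    obtain ⟨α, β, hne, hrel⟩ := h i hi
    have hpt : ∀ x, α * v i x + β * (∑ j, a i j * v j x) = 0 := by
      intro x
      have := congrFun hrel x
      simpa [hwx i x] using this
    by_cases hβ : β = 0
    · have hα : α ≠ 0 := by tauto
      have hv : ∀ x, v i x = 0 := by
        intro x
        have h2 := hpt x
        rw [hβ, zero_mul, add_zero] at h2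
        exact (mul_eq_zero.mp h2).resolve_left hα
      simp [hv]
    · have hs := hpt s
      have ht := hpt t
      have hws : (∑ j, a i j * v j s) = -(α / β) * v i s := by
        field_simp
        linear_combination hs
      have hwt : (∑ j, a i j * v j t) = -(α / β) * v i t := by
        field_simp
        linear_combination ht
      rw [hws, hwt]; ring
  -- global symmetry of the double sum
  have hQ : ∀ s t : Fin k, ∑ i, v i s * (∑ j, a i j * v j t)
      = ∑ i, v i t * (∑ j, a i j * v j s) := by
    intro s t
    simp only [Finset.mul_sum]
    rw [Finset.sum_comm]
    apply Finset.sum_congr rfl; intro i _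
    apply Finset.sum_congr rfl; intro j _
    rw [hsym j i]; ring
  have key : ∀ s t : Fin k, v L s * (∑ j, a L j * v j t) = v L t * (∑ j, a L j * v j s) := by
    intro s t
    have h0 : ∑ i, (v i s * (∑ j, a i j * v j t) - v i t * (∑ j, a i j * v j s)) = 0 := by
      rw [Finset.sum_sub_distrib, hQ s t, sub_self]
    have h1 : ∑ i, (v i s * (∑ j, a i j * v j t) - v i t * (∑ j, a i j * v j s))
        = v L s * (∑ j, a L j * v j t) - v L t * (∑ j, a L j * v j s) :=
      Finset.sum_eq_single_of_mem L (Finset.mem_univ L)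
        (fun i _ hi => by rw [hterm i hi s t, sub_self])
    exact sub_eq_zero.mp (h1 ▸ h0)
  by_cases hF : ∀ x, (∑ j, a L j * v j x) = 0
  · refine ⟨0, 1, Or.inr one_ne_zero, ?_⟩
    funext x
    simp [hwx, hF x]
  · push_neg at hF
    obtain ⟨s0, hs0⟩ := hF
    refine ⟨1, -(v L s0) / (∑ j, a L j * v j s0), Or.inl one_ne_zero, ?_⟩
    funext x
    have hk := key s0 x
    simp only [Pi.add_apply, Pi.smul_apply, smul_eq_mul, hwx, Pi.zero_apply, one_mul]
    field_simp
    linear_combination -hk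
end

section
/- Let Q be a real symmetric matrix with nonnegative off-diagonal entries, and suppose Q is irreducible (its associated graph on indices is connected). If there exists a nonzero vector u with strictly positive entries such that Qu = 0, then the kernel of Q is one-dimensional and is spanned by u. -/
open Matrix

/-- For an irreducible real symmetric matrix with nonnegative off-diagonal
entries admitting a strictly positive vector in its kernel, the kernel is
one-dimensional, spanned by that vector. -/
theorem stmt_1 {n : ℕ} (Q : Matrix (Fin n) (Fin n) ℝ)
    (hsym : Q.IsSymm)
    (hoff : ∀ i j, i ≠ j → 0 ≤ Q i j)
    (hirr : ∀ s : Finset (Fin n), s.Nonempty → sᶜ.Nonempty →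
      ∃ i ∈ s, ∃ j ∈ sᶜ, Q i j ≠ 0)
    (u : Fin n → ℝ) (hu : ∀ i, 0 < u i) (hker : Q.mulVec u = 0) :
    ∀ v : Fin n → ℝ, Q.mulVec v = 0 → ∃ c : ℝ, v = c • u := by
  intro v hv
  rcases Nat.eq_zero_or_pos n with h0 | hn
  · exact ⟨0, funext fun i => absurd i.isLt (by omega)⟩
  · haveI : Nonempty (Fin n) := ⟨⟨0, hn⟩⟩
    obtain ⟨i0, -, hi0⟩ := Finset.exists_min_image Finset.univ
      (fun i => v i / u i) ⟨⟨0, hn⟩, Finset.mem_univ _⟩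
    set c : ℝ := v i0 / u i0 with hc
    set w : Fin n → ℝ := fun i => v i - c * u i with hw
    have hwnn : ∀ i, 0 ≤ w i := by
      intro i
      have h1 : c ≤ v i / u i := hi0 i (Finset.mem_univ _)
      have : c * u i ≤ v i := by
        have := (le_div_iff₀ (hu i)).mp h1
        linarith
      simp [hw]; linarith
    have hwi0 : w i0 = 0 := by
      simp [hw, hc, div_mul_cancel₀ _ (hu i0).ne']
    have hQw : ∀ i, ∑ j, Q i j * w j = 0 := by
      intro i
      have h1 : Q.mulVec v i = 0 := by rw [hv]; rfl
      have h2 : Q.mulVec u i = 0 := by rw [hker]; rfl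
      simp only [mulVec, dotProduct] at h1 h2
      have : ∑ j, Q i j * w j = (∑ j, Q i j * v j) - c * ∑ j, Q i j * u j := by
        rw [Finset.mul_sum, ← Finset.sum_sub_distrib]
        congr 1; ext j; simp [hw]; ring
      rw [this, h1, h2]; ring
    set S : Finset (Fin n) := Finset.univ.filter (fun i => w i = 0) with hS
    have hSne : S.Nonempty := ⟨i0, by simp [hS, hwi0]⟩
    have hScompl : ¬ Sᶜ.Nonempty := by
      rintro hne
      obtain ⟨i, hiS, j, hjS, hij⟩ := hirr S hSne hne
      have hwi : w i = 0 := by simpa [hS] using hiS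
      have hwj : w j ≠ 0 := by simpa [hS] using hjS
      have hwj' : 0 < w j := lt_of_le_of_ne (hwnn j) (Ne.symm hwj)
      have hne' : i ≠ j := by rintro rfl; exact hwj hwi
      have hterm : ∀ k ∈ Finset.univ, 0 ≤ Q i k * w k := by
        intro k _
        rcases eq_or_ne i k with rfl | hk
        · rw [hwi]; simp
        · exact mul_nonneg (hoff i k hk) (hwnn k)
      have := (Finset.sum_eq_zero_iff_of_nonneg hterm).mp (hQw i) j (Finset.mem_univ _)
      have hQpos : 0 < Q i j := lt_of_le_of_ne (hoff i j hne') (Ne.symm hij)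
      nlinarith
    have hwz : ∀ i, w i = 0 := by
      intro i
      by_contra h
      exact hScompl ⟨i, by simp [hS, h]⟩
    refine ⟨c, funext fun i => ?_⟩
    have := hwz i
    simp only [hw] at this
    simp [Pi.smul_apply, smul_eq_mul]; linarith
end

section
/- Let Q be an irreducible real symmetric n×n matrix with nonnegative off-diagonal entries. Then exactly one of the following holds: (Fin) Q is negative definite; (Aff) Q has corank 1 and its kernel is generated by a vector with strictly positive entries; (Ind) there exists a vector u with strictly positive entries such that Qu has strictly positive entries. -/
/-!
Let `μ` be the maximum of the Rayleigh quotient `vᵀQv / vᵀv`. Since the off-diagonal entries are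
nonnegative, replacing a maximiser `v` by `|v|` does not decrease `vᵀQv`, so `|v|` is a
nonnegative eigenvector for `μ`, and irreducibility forces it to be strictly positive. Applied to an
arbitrary `μ`-eigenvector, the same argument shows it has no zero coordinate, so the
`μ`-eigenspace is a line spanned by a positive vector `u`. Pairing `u` with a positive `w` gives
`uᵀQw = μ uᵀw` with `uᵀw > 0`, so the three types correspond to `μ < 0`, `μ = 0`, `μ > 0`.
-/

open Matrix

namespace Matrix

variable {ι : Type*} [Fintype ι]

lemma dotProduct_self_pos {v : ι → ℝ} (hv : v ≠ 0) : 0 < v ⬝ᵥ v :=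
  (Finset.sum_nonneg fun i _ => mul_self_nonneg (v i)).lt_of_ne'
    (dotProduct_self_eq_zero.not.2 hv)

lemma dotProduct_pos_of_pos [Nonempty ι] {v w : ι → ℝ} (hv : ∀ i, 0 < v i)
    (hw : ∀ i, 0 < w i) : 0 < v ⬝ᵥ w :=
  Finset.sum_pos (fun i _ => mul_pos (hv i) (hw i)) Finset.univ_nonempty

lemma abs_dotProduct_abs_self (v : ι → ℝ) : |v| ⬝ᵥ |v| = v ⬝ᵥ v := by
  simp only [dotProduct, Pi.abs_apply, abs_mul_abs_self]

lemma exists_forall_dotProduct_mulVec_le [Nonempty ι] (Q : Matrix ι ι ℝ) :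
    ∃ μ : ℝ, (∀ v, v ⬝ᵥ Q *ᵥ v ≤ μ * (v ⬝ᵥ v)) ∧ ∃ x ≠ 0, x ⬝ᵥ Q *ᵥ x = μ * (x ⬝ᵥ x) := by
  set R : (ι → ℝ) → ℝ := fun v => (v ⬝ᵥ Q *ᵥ v) / (v ⬝ᵥ v)
  have hR_smul : ∀ (c : ℝ) (v : ι → ℝ), c ≠ 0 → R (c • v) = R v := by
    intro c v hc
    simp only [R, smul_dotProduct, mulVec_smul, dotProduct_smul, smul_eq_mul, ← mul_assoc]
    exact mul_div_mul_left _ _ (mul_ne_zero hc hc)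
  have hS : (Metric.sphere (0 : ι → ℝ) 1).Nonempty :=
    ⟨fun _ => 1, by simp [pi_norm_const]⟩
  have hRcont : ContinuousOn R (Metric.sphere 0 1) := by
    refine ContinuousOn.div (by fun_prop) (by fun_prop) fun v hv => ?_
    exact dotProduct_self_eq_zero.not.2 (ne_zero_of_mem_unit_sphere ⟨v, hv⟩)
  obtain ⟨x, hx, hmax⟩ := (isCompact_sphere (0 : ι → ℝ) 1).exists_isMaxOn hS hRcont
  have hx0 : x ≠ 0 := ne_zero_of_mem_unit_sphere ⟨x, hx⟩
  refine ⟨R x, fun v => ?_, x, hx0, (div_mul_cancel₀ _ (dotProduct_self_pos hx0).ne').symm⟩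
  rcases eq_or_ne v 0 with rfl | hv
  · simp
  have hv' : ‖v‖⁻¹ • v ∈ Metric.sphere (0 : ι → ℝ) 1 := by
    simp [norm_smul, norm_ne_zero_iff.2 hv]
  rw [← div_le_iff₀ (dotProduct_self_pos hv)]
  exact (hR_smul _ v (inv_ne_zero (norm_ne_zero_iff.2 hv))).symm.trans_le (hmax hv')

lemma mulVec_eq_smul_of_dotProduct_mulVec_eq {Q : Matrix ι ι ℝ} (hQ : Q.IsSymm) {μ : ℝ}
    (hμ : ∀ v, v ⬝ᵥ Q *ᵥ v ≤ μ * (v ⬝ᵥ v)) {x : ι → ℝ}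
    (hx : x ⬝ᵥ Q *ᵥ x = μ * (x ⬝ᵥ x)) : Q *ᵥ x = μ • x := by
  classical
  set A : Matrix ι ι ℝ := μ • 1 - Q
  have hA : ∀ v, A *ᵥ v = μ • v - Q *ᵥ v := fun v => by
    simp only [A, sub_mulVec, smul_mulVec, one_mulVec]
  have hApsd : A.PosSemidef := by
    refine posSemidef_iff_dotProduct_mulVec.2
      ⟨isHermitian_iff_isSymm.2 ((isSymm_one.smul μ).sub hQ), fun v => ?_⟩
    rw [star_trivial, hA, dotProduct_sub, dotProduct_smul, smul_eq_mul, sub_nonneg]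
    exact hμ v
  have hAx : A *ᵥ x = 0 := by
    rw [← hApsd.dotProduct_mulVec_zero_iff, star_trivial, hA, dotProduct_sub, dotProduct_smul,
      smul_eq_mul, hx, sub_self]
  rwa [hA, sub_eq_zero, eq_comm] at hAx

lemma IsSymm.dotProduct_mulVec_of_mulVec_eq_smul {Q : Matrix ι ι ℝ} (hQ : Q.IsSymm)
    {μ : ℝ} {u : ι → ℝ} (hu : Q *ᵥ u = μ • u) (w : ι → ℝ) :
    u ⬝ᵥ Q *ᵥ w = μ * (u ⬝ᵥ w) := by
  rw [dotProduct_mulVec, ← mulVec_transpose, hQ.eq, hu, smul_dotProduct, smul_eq_mul]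

section Metzler

variable {Q : Matrix ι ι ℝ} (hoff : ∀ i j, i ≠ j → 0 ≤ Q i j)
include hoff

lemma dotProduct_mulVec_le_abs (v : ι → ℝ) : v ⬝ᵥ Q *ᵥ v ≤ |v| ⬝ᵥ Q *ᵥ |v| := by
  simp only [dotProduct, mulVec, Finset.mul_sum, Pi.abs_apply]
  refine Finset.sum_le_sum fun i _ => Finset.sum_le_sum fun j _ => ?_
  rcases eq_or_ne i j with rfl | hij
  · rw [mul_left_comm, mul_left_comm |v i|, abs_mul_abs_self]
  · rw [mul_left_comm, mul_left_comm |v i|]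
    exact mul_le_mul_of_nonneg_left ((le_abs_self _).trans (abs_mul _ _).le) (hoff i j hij)

variable [DecidableEq ι]
  (hirr : ∀ s : Finset ι, s.Nonempty → sᶜ.Nonempty → ∃ i ∈ s, ∃ j ∈ sᶜ, Q i j ≠ 0)
include hirr

lemma pos_of_mulVec_eq_smul {u : ι → ℝ} (hu : 0 ≤ u) (hu0 : u ≠ 0) {μ : ℝ} (hQu : Q *ᵥ u = μ • u) (i : ι) :
    0 < u i := by
  refine (hu i).lt_of_ne' fun hi => ?_
  set s : Finset ι := {j | u j = 0}
  have hsc : sᶜ.Nonempty := by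
    obtain ⟨j, hj⟩ := Function.ne_iff.1 hu0
    exact ⟨j, by simpa [s] using hj⟩
  obtain ⟨j, hj, k, hk, hjk⟩ := hirr s ⟨i, by simpa [s] using hi⟩ hsc
  replace hk := Finset.mem_compl.1 hk
  simp only [s, Finset.mem_filter, Finset.mem_univ, true_and] at hj hk
  -- the `j`-th row of `Q *ᵥ u = μ • u` is a vanishing sum of nonnegative terms
  have hterms : ∀ l ∈ Finset.univ, 0 ≤ Q j l * u l := fun l _ => by
    rcases eq_or_ne j l with rfl | hjl
    · simp [hj]
    · exact mul_nonneg (hoff j l hjl) (hu l)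
  have hrow : ∑ l, Q j l * u l = 0 := by
    simpa [mulVec, dotProduct, hj] using congrFun hQu j
  exact mul_ne_zero hjk hk
    ((Finset.sum_eq_zero_iff_of_nonneg hterms).1 hrow k (Finset.mem_univ k))

/-- Perron–Frobenius for symmetric irreducible matrices with nonnegative off-diagonal entries:
the top of the spectrum is a simple eigenvalue with a positive eigenvector. -/
theorem exists_pos_eigenvector_of_isSymm [Nonempty ι] (hsym : Q.IsSymm) :
    ∃ μ : ℝ, ∃ u : ι → ℝ, (∀ i, 0 < u i) ∧ Q *ᵥ u = μ • u ∧
      (∀ v, v ⬝ᵥ Q *ᵥ v ≤ μ * (v ⬝ᵥ v)) ∧ ∀ v, Q *ᵥ v = μ • v → ∃ c : ℝ, v = c • u := by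
  obtain ⟨μ, hμ, x, hx0, hx⟩ := exists_forall_dotProduct_mulVec_le Q
  -- `|v|` does at least as well as `v` in the Rayleigh quotient, so it is a top eigenvector too
  have habs : ∀ v, v ⬝ᵥ Q *ᵥ v = μ * (v ⬝ᵥ v) → Q *ᵥ |v| = μ • |v| := fun v hv =>
    mulVec_eq_smul_of_dotProduct_mulVec_eq hsym hμ <| le_antisymm (hμ |v|) <| by
      rw [abs_dotProduct_abs_self, ← hv]
      exact dotProduct_mulVec_le_abs hoff v
  have hpos : ∀ v ≠ 0, v ⬝ᵥ Q *ᵥ v = μ * (v ⬝ᵥ v) → ∀ i, 0 < |v i| := fun v hv0 hv =>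
    pos_of_mulVec_eq_smul hoff hirr (abs_nonneg v)
      (fun h => hv0 (funext fun i => abs_eq_zero.1 (congrFun h i))) (habs v hv)
  refine ⟨μ, |x|, hpos x hx0 hx, habs x hx, hμ, fun v hv => ?_⟩
  obtain ⟨i⟩ := ‹Nonempty ι›
  -- subtracting a multiple of `|x|` produces a top eigenvector with a zero coordinate
  set w := v - (v i / |x i|) • |x|
  have hw : Q *ᵥ w = μ • w := by
    rw [mulVec_sub, mulVec_smul, hv, habs x hx, smul_sub, smul_comm]
  have hwi : w i = 0 := by
    simp [w, Pi.abs_apply, (hpos x hx0 hx i).ne']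
  by_contra hne
  refine (hpos w (fun h => hne ⟨v i / |x i|, sub_eq_zero.1 h⟩) ?_ i).ne' (by simp [hwi])
  rw [hw, dotProduct_smul, smul_eq_mul]

end Metzler

section SignOfPerronEigenvalue

variable [Nonempty ι] {Q : Matrix ι ι ℝ} {μ : ℝ} {u : ι → ℝ} (hu : ∀ i, 0 < u i)
  (hQu : Q *ᵥ u = μ • u)
include hu hQu

lemma forall_dotProduct_mulVec_neg_iff (hμ : ∀ v, v ⬝ᵥ Q *ᵥ v ≤ μ * (v ⬝ᵥ v)) :
    (∀ v : ι → ℝ, v ≠ 0 → v ⬝ᵥ Q *ᵥ v < 0) ↔ μ < 0 := by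
  have hu0 : u ≠ 0 := fun h => (hu ‹Nonempty ι›.some).ne' (congrFun h _)
  refine ⟨fun h => ?_, fun h v hv =>
    (hμ v).trans_lt (mul_neg_of_neg_of_pos h (dotProduct_self_pos hv))⟩
  have := h u hu0
  rw [hQu, dotProduct_smul, smul_eq_mul] at this
  exact neg_of_mul_neg_left this (dotProduct_self_pos hu0).le

variable (hsym : Q.IsSymm)
include hsym

lemma exists_pos_ker_eq_span_iff (hker : ∀ v, Q *ᵥ v = μ • v → ∃ c : ℝ, v = c • u) :
    (∃ w : ι → ℝ, (∀ i, 0 < w i) ∧ Q *ᵥ w = 0 ∧ ∀ v, Q *ᵥ v = 0 → ∃ c : ℝ, v = c • w) ↔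
      μ = 0 := by
  refine ⟨fun ⟨w, hw, hQw, _⟩ => ?_, fun h => ⟨u, hu, ?_, fun v hv => hker v ?_⟩⟩
  · have := hsym.dotProduct_mulVec_of_mulVec_eq_smul hQu w
    rw [hQw, dotProduct_zero, eq_comm] at this
    exact (mul_eq_zero.1 this).resolve_right (dotProduct_pos_of_pos hu hw).ne'
  · rw [hQu, h, zero_smul]
  · rw [hv, h, zero_smul]

lemma exists_pos_mulVec_pos_iff :
    (∃ w : ι → ℝ, (∀ i, 0 < w i) ∧ ∀ i, 0 < (Q *ᵥ w) i) ↔ 0 < μ := by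
  refine ⟨fun ⟨w, hw, hQw⟩ => ?_, fun h => ⟨u, hu, fun i => ?_⟩⟩
  · have := hsym.dotProduct_mulVec_of_mulVec_eq_smul hQu w
    exact (pos_iff_pos_of_mul_pos (this ▸ dotProduct_pos_of_pos hu hQw)).2
      (dotProduct_pos_of_pos hu hw)
  · rw [hQu]
    exact mul_pos h (hu i)

end SignOfPerronEigenvalue

end Matrix

/-- Vinberg's trichotomy: an irreducible real symmetric matrix with
nonnegative off-diagonal entries is of exactly one of finite, affine, or
indefinite type. -/
theorem stmt_2 {n : ℕ} (hn : 0 < n) (Q : Matrix (Fin n) (Fin n) ℝ)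
    (hsym : Q.IsSymm)
    (hoff : ∀ i j, i ≠ j → 0 ≤ Q i j)
    (hirr : ∀ s : Finset (Fin n), s.Nonempty → sᶜ.Nonempty →
      ∃ i ∈ s, ∃ j ∈ sᶜ, Q i j ≠ 0) :
    let Fin' : Prop := ∀ v : Fin n → ℝ, v ≠ 0 → v ⬝ᵥ Q.mulVec v < 0
    let Aff : Prop := ∃ u : Fin n → ℝ, (∀ i, 0 < u i) ∧ Q.mulVec u = 0 ∧
      ∀ v : Fin n → ℝ, Q.mulVec v = 0 → ∃ c : ℝ, v = c • u
    let Ind : Prop := ∃ u : Fin n → ℝ, (∀ i, 0 < u i) ∧ ∀ i, 0 < Q.mulVec u i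
    (Fin' ∧ ¬ Aff ∧ ¬ Ind) ∨ (¬ Fin' ∧ Aff ∧ ¬ Ind) ∨ (¬ Fin' ∧ ¬ Aff ∧ Ind) := by
  intro Fin' Aff Ind
  have : Nonempty (Fin n) := ⟨⟨0, hn⟩⟩
  obtain ⟨μ, u, hu, hQu, hμ, hker⟩ := exists_pos_eigenvector_of_isSymm hoff hirr hsym
  have hFin : Fin' ↔ μ < 0 := forall_dotProduct_mulVec_neg_iff hu hQu hμ
  have hAff : Aff ↔ μ = 0 := exists_pos_ker_eq_span_iff hu hQu hsym hker
  have hInd : Ind ↔ 0 < μ := exists_pos_mulVec_pos_iff hu hQu hsym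
  rw [hFin, hAff, hInd]
  rcases lt_trichotomy μ 0 with h | h | h
  · exact Or.inl ⟨h, h.ne, h.not_gt⟩
  · exact Or.inr (Or.inl ⟨h.not_lt, h, h.not_gt⟩)
  · exact Or.inr (Or.inr ⟨h.not_gt, h.ne', h⟩)
end

section
/- Let Q = Q_1 ⊕ ... ⊕ Q_κ be a block-diagonal real symmetric matrix where Q_1 satisfies: there is a vector u_1 with strictly positive entries such that Q_1 u_1 has strictly positive entries (indefinite type), and each Q_λ for λ ≥ 2 admits a vector u_λ with strictly negative entries such that Q_λ u_λ has nonpositive entries. Suppose moreover Q = D − JJᵀ where D is positive semidefinite of rank 1 with D u = 0 for the concatenated vector u = (u_1, ..., u_κ) (after suitable positive rescaling of the u_λ). Then one reaches a contradiction: 0 ≥ −(Jᵀu, Jᵀu) = (Qu, u) ≥ (Q_1 u_1, u_1) > 0. Hence no block of Q can be of indefinite type. -/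
open Matrix

/-- The key inequality argument: if `Q = D − JJᵀ` with `D = d̄ᵀd̄`, `Du = 0`,
and `u` is positive with `Qu` positive on a nonempty block (indefinite type)
while `u` is negative with `Qu` nonpositive elsewhere, then a contradiction
follows; hence no block can be of indefinite type. -/
theorem stmt_13 {n r : ℕ} (J : Matrix (Fin n) (Fin r) ℝ) (d : Fin n → ℝ)
    (Q : Matrix (Fin n) (Fin n) ℝ)
    (hQ : Q = Matrix.vecMulVec d d - J * Jᵀ)
    (p : Fin n → Prop) (hpne : ∃ i, p i)
    (u : Fin n → ℝ)
    (hD : (Matrix.vecMulVec d d).mulVec u = 0)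
    (hpos : ∀ i, p i → 0 < u i ∧ 0 < Q.mulVec u i)
    (hneg : ∀ i, ¬ p i → u i < 0 ∧ Q.mulVec u i ≤ 0) :
    False := by
  classical
  have hSpos : 0 < u ⬝ᵥ Q.mulVec u := by
    obtain ⟨i0, hi0⟩ := hpne
    apply Finset.sum_pos'
    · intro i _
      by_cases hi : p i
      · exact le_of_lt (mul_pos (hpos i hi).1 (hpos i hi).2)
      · obtain ⟨h1,h2⟩ := hneg i hi; nlinarith
    · exact ⟨i0, Finset.mem_univ i0,
        mul_pos (hpos i0 hi0).1 (hpos i0 hi0).2⟩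
  have hSle : u ⬝ᵥ Q.mulVec u ≤ 0 := by
    have h1 : Q.mulVec u = -(J * Jᵀ).mulVec u := by
      rw [hQ, sub_mulVec, hD, zero_sub]
    rw [h1, dotProduct_neg, neg_nonpos, ← mulVec_mulVec]
    rw [dotProduct_mulVec, ← mulVec_transpose]
    exact Finset.sum_nonneg fun i _ => mul_self_nonneg _
  exact absurd hSle (not_le.mpr hSpos)
end
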